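/- arXiv:2209.06099 — 2 statements merged into one kernel-verified Lean document; each statement's English description precedes it below -/
import Mathlib

section
/- Let d ≥ 2. Define f : ℤ → ℤ ∪ {airplane indices} by the recursion: given m, write m = d²k + dℓ + n with ℓ,n ∈ {0,...,d-1}; if ℓ = n recurse on k; if ℓ ≠ n output the airplane index (n-ℓ if n>ℓ, else d-(ℓ-n)); with base cases f(0) = 'rabbit' and f(-1) = 'corabbit'. Then f is well-defined (the recursion terminates for every m ∈ ℤ) and f(m) = f(⌊m/d²⌋) whenever (d+1) | (m mod d²). -/
/-!
Off its two fixed points `0` and `-1`, the map `m ↦ ⌊m / d²⌋` strictly decreases `|m|`, so the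
recursion is well-founded on `|m|`, which gives both existence and uniqueness. For the invariance,
a residue `0 ≤ r < d²` divisible by `d + 1` is `r = (d + 1) j = d j + j` with `j < d`, so its two
base-`d` digits coincide and the recursion itself reads `f m = f ⌊m / d²⌋`.
-/

namespace Int

theorem natAbs_ediv_lt_natAbs {b m : ℤ} (hb : 2 ≤ b) (h0 : m ≠ 0) (h1 : m ≠ -1) :
    (m / b).natAbs < m.natAbs := by
  have hdiv := mul_ediv_add_emod m b
  have hmod := emod_nonneg m (by omega : b ≠ 0)
  have hlt := emod_lt_of_pos m (by omega : 0 < b)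
  rcases lt_or_ge m 0 with hm | hm
  · have hq : m / b < 0 := ediv_neg_of_neg_of_pos hm (by omega)
    have : m < m / b := by
      rcases (show m / b = -1 ∨ m / b ≤ -2 by omega) with hq1 | hq2
      · omega
      · nlinarith
    omega
  · have hq : 0 ≤ m / b := ediv_nonneg hm (by omega)
    have : m / b < m := ediv_lt_self_of_pos_of_ne_one (by omega) (by omega)
    omega

theorem ediv_eq_emod_of_dvd_succ {d r : ℤ} (hd : 0 < d) (hr : 0 ≤ r) (hrd : r < d ^ 2)
    (hdvd : d + 1 ∣ r) : r / d = r % d := by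
  obtain ⟨j, rfl⟩ := hdvd
  have hj0 : 0 ≤ j := by nlinarith
  have hjd : j < d := by nlinarith
  rw [show (d + 1) * j = j + d * j by ring, add_mul_ediv_left j j hd.ne', add_mul_emod_self_left,
    ediv_eq_zero_of_lt hj0 hjd, emod_eq_of_lt hj0 hjd, zero_add]

end Int

section TwistedRabbit

variable (d : ℤ)

/-- `Sum.inr true` is the rabbit, `Sum.inr false` the corabbit and `Sum.inl i` the airplane
with index `i`. -/
def IsTwistedRabbitRec (f : ℤ → ℤ ⊕ Bool) : Prop :=
  f 0 = Sum.inr true ∧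
  f (-1) = Sum.inr false ∧
  ∀ m : ℤ, m ≠ 0 → m ≠ -1 →
    (let ℓ := (m % d ^ 2) / d
     let n := (m % d ^ 2) % d
     f m = if ℓ = n then f (m / d ^ 2)
           else Sum.inl (if ℓ < n then n - ℓ else d - (ℓ - n)))

variable {d}

def twistedRabbit (hd : 2 ≤ d) (m : ℤ) : ℤ ⊕ Bool :=
  if h0 : m = 0 then Sum.inr true
  else if h1 : m = -1 then Sum.inr false
  else
    let ℓ := (m % d ^ 2) / d
    let n := (m % d ^ 2) % d
    if ℓ = n then twistedRabbit hd (m / d ^ 2)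
    else Sum.inl (if ℓ < n then n - ℓ else d - (ℓ - n))
termination_by m.natAbs
decreasing_by exact Int.natAbs_ediv_lt_natAbs (by nlinarith) h0 h1

theorem isTwistedRabbitRec_twistedRabbit (hd : 2 ≤ d) :
    IsTwistedRabbitRec d (twistedRabbit hd) := by
  refine ⟨by rw [twistedRabbit]; simp, by rw [twistedRabbit]; simp, fun m h0 h1 => ?_⟩
  rw [twistedRabbit]
  simp [h0, h1]

theorem IsTwistedRabbitRec.unique (hd : 2 ≤ d) {f g : ℤ → ℤ ⊕ Bool}
    (hf : IsTwistedRabbitRec d f) (hg : IsTwistedRabbitRec d g) : f = g := by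
  obtain ⟨hf0, hf1, hfm⟩ := hf
  obtain ⟨hg0, hg1, hgm⟩ := hg
  funext m
  induction h : m.natAbs using Nat.strong_induction_on generalizing m with
  | _ k ih =>
    by_cases h0 : m = 0
    · rw [h0, hf0, hg0]
    by_cases h1 : m = -1
    · rw [h1, hf1, hg1]
    rw [hfm m h0 h1, hgm m h0 h1]
    exact if_congr Iff.rfl (ih _ (h ▸ Int.natAbs_ediv_lt_natAbs (by nlinarith) h0 h1) _ rfl) rfl

theorem IsTwistedRabbitRec.apply_eq_apply_ediv {f : ℤ → ℤ ⊕ Bool} (hd : 2 ≤ d)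
    (hf : IsTwistedRabbitRec d f) {m : ℤ} (hdvd : d + 1 ∣ m % d ^ 2) :
    f m = f (m / d ^ 2) := by
  obtain ⟨hf0, hf1, hfm⟩ := hf
  by_cases h0 : m = 0
  · simp [h0]
  by_cases h1 : m = -1
  · rw [h1, Int.ediv_eq_neg_one_of_neg_of_le (by norm_num) (by nlinarith)]
  have hd2 : 0 < d ^ 2 := by positivity
  have hln := Int.ediv_eq_emod_of_dvd_succ (by omega) (Int.emod_nonneg m hd2.ne')
    (Int.emod_lt_of_pos m hd2) hdvd
  simpa only [if_pos hln] using hfm m h0 h1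

end TwistedRabbit

/-- The twisted-rabbit reduction recursion is well-defined: there is a unique
`f : ℤ → ℤ ⊕ Bool` (with `Sum.inr true` = rabbit, `Sum.inr false` = corabbit,
`Sum.inl i` = the airplane index) with `f 0 = rabbit`, `f (-1) = corabbit`,
satisfying the recursion: writing `m = d²k + dℓ + n` with `ℓ,n ∈ {0,...,d-1}`,
if `ℓ = n` then `f m = f k`, else `f m` is the airplane index `n - ℓ` (if
`n > ℓ`) or `d - (ℓ - n)` (if `n < ℓ`); moreover `f m = f ⌊m/d²⌋` whenever
`(d+1) ∣ (m mod d²)`. -/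
theorem stmt14 (d : ℤ) (hd : 2 ≤ d) :
    ∃! f : ℤ → ℤ ⊕ Bool,
      f 0 = Sum.inr true ∧
      f (-1) = Sum.inr false ∧
      (∀ m : ℤ, m ≠ 0 → m ≠ -1 →
        (let ℓ := (m % d ^ 2) / d
         let n := (m % d ^ 2) % d
         f m = if ℓ = n then f (m / d ^ 2)
               else Sum.inl (if ℓ < n then n - ℓ else d - (ℓ - n)))) ∧
      (∀ m : ℤ, (d + 1) ∣ (m % d ^ 2) → f m = f (m / d ^ 2)) := by
  have hrec := isTwistedRabbitRec_twistedRabbit hd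
  refine ⟨twistedRabbit hd, ⟨hrec.1, hrec.2.1, hrec.2.2, fun m => hrec.apply_eq_apply_ediv hd⟩, ?_⟩
  rintro g ⟨g0, g1, gm, -⟩
  exact IsTwistedRabbitRec.unique hd ⟨g0, g1, gm⟩ hrec
end

section
/- Let d ≥ 2 and S ≥ 1. Among integers m with 0 ≤ m < (d²)^S, for each fixed j ∈ {1,...,d-1}, the number of m whose reduction (via the recursion: repeatedly strip the last base-d² digit while it is divisible by d+1; output index determined by the first digit dℓ+n with ℓ≠n as j ≡ n-ℓ mod d) yields j is exactly ((d²)^S - d^S)/(d-1). -/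
/-- The least significant base-`d²` digit of `m` not divisible by `d+1`. -/
def firstBadDigit (d m : ℕ) : Option ℕ :=
  (Nat.digits (d ^ 2) m).find? (fun r => !(decide ((d + 1) ∣ r)))

/-- The airplane index produced by the reduction: strip base-`d²` digits
divisible by `d+1`; from the first digit `r = dℓ + n` with `ℓ ≠ n`, output
`n - ℓ` if `n > ℓ` and `d - (ℓ - n)` otherwise. -/
def airplaneIndex (d m : ℕ) : Option ℕ :=
  (firstBadDigit d m).map (fun r =>
    if r / d < r % d then r % d - r / d else d - (r / d - r % d))

/-!
Write a base-`d²` digit as `r = dℓ + n` with `ℓ, n < d`. Then `d + 1 ∣ r` iff `ℓ = n`, and for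
each `j ∈ {1, …, d-1}` exactly `d` digits, one for each `ℓ`, have `n - ℓ ≡ j (mod d)`. The index
of `r + d² q` is that of the digit `r` unless `r` is one of the `d` multiples of `d + 1`, in which
case it is that of `q`; so the number `N n` of `m < n` with index `j` satisfies
`N (d² n) = d (n + N n)`, and induction on `S` gives `N ((d²)^S) (d - 1) + d^S = (d²)^S`.
-/

open Finset

namespace Finset

theorem sum_range_mul {M : Type*} [AddCommMonoid M] (f : ℕ → M) (b n : ℕ) :
    ∑ x ∈ range (b * n), f x = ∑ q ∈ range n, ∑ r ∈ range b, f (b * q + r) := by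
  induction n with
  | zero => simp
  | succ n ih => rw [Nat.mul_succ, sum_range_add, ih, sum_range_succ]

end Finset

namespace Airplane

/-- For `r = dℓ + n` with `ℓ, n < d` this is the representative of `n - ℓ (mod d)` in
`{1, …, d}`; it equals `d` exactly when `ℓ = n`, i.e. on the digits that get stripped. -/
def digitIndex (d r : ℕ) : ℕ :=
  if r / d < r % d then r % d - r / d else d - (r / d - r % d)

variable {d ℓ n j r : ℕ}

theorem digitIndex_mul_add_eq_iff (hℓ : ℓ < d) (hn : n < d) (hj1 : 1 ≤ j) (hjd : j ≤ d) :
    digitIndex d (d * ℓ + n) = j ↔ n = (ℓ + j) % d := by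
  have hd : 0 < d := by omega
  have hdiv : (d * ℓ + n) / d = ℓ := by
    rw [Nat.mul_add_div hd, Nat.div_eq_of_lt hn, add_zero]
  have hmod : (d * ℓ + n) % d = n := by rw [Nat.mul_add_mod, Nat.mod_eq_of_lt hn]
  unfold digitIndex
  rw [hdiv, hmod]
  rcases lt_or_ge (ℓ + j) d with h | h
  · rw [Nat.mod_eq_of_lt h]
    split_ifs <;> omega
  · rw [Nat.mod_eq_sub_mod h, Nat.mod_eq_of_lt (by omega)]
    split_ifs <;> omega

theorem succ_dvd_mul_add_iff (hℓ : ℓ < d) (hn : n < d) : d + 1 ∣ d * ℓ + n ↔ ℓ = n := by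
  refine ⟨fun ⟨k, hk⟩ => ?_, fun h => ⟨ℓ, by rw [h]; ring⟩⟩
  rcases lt_trichotomy k ℓ with h | rfl | h <;> nlinarith

theorem div_lt_of_lt_sq (hr : r < d ^ 2) : r / d < d :=
  Nat.div_lt_of_lt_mul (by rwa [← sq])

theorem succ_dvd_iff_digitIndex_eq (hr : r < d ^ 2) : d + 1 ∣ r ↔ digitIndex d r = d := by
  have hd : 0 < d := by rcases d with _ | d <;> simp_all
  rw [← Nat.div_add_mod r d, succ_dvd_mul_add_iff (div_lt_of_lt_sq hr) (Nat.mod_lt r hd),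
    digitIndex_mul_add_eq_iff (div_lt_of_lt_sq hr) (Nat.mod_lt r hd) hd le_rfl,
    Nat.add_mod_right, Nat.mod_eq_of_lt (div_lt_of_lt_sq hr), eq_comm]

theorem card_digitIndex_eq (hj1 : 1 ≤ j) (hjd : j ≤ d) :
    #{r ∈ range (d ^ 2) | digitIndex d r = j} = d := by
  have hd : 0 < d := by omega
  have hdigit : ∀ ℓ < d, d * ℓ + (ℓ + j) % d < d ^ 2 := fun ℓ hℓ => by
    have : d * ℓ + d ≤ d * d := by rw [← Nat.mul_succ]; exact Nat.mul_le_mul_left d hℓ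
    have := Nat.mod_lt (ℓ + j) hd
    rw [sq]; omega
  refine (card_nbij' (· / d) (fun ℓ => d * ℓ + (ℓ + j) % d) ?_ ?_ ?_ ?_).trans (card_range d)
  · intro r hr
    simp only [mem_coe, mem_filter, mem_range] at hr ⊢
    exact div_lt_of_lt_sq hr.1
  · intro ℓ hℓ
    simp only [mem_coe, mem_filter, mem_range] at hℓ ⊢
    exact ⟨hdigit ℓ hℓ, (digitIndex_mul_add_eq_iff hℓ (Nat.mod_lt _ hd) hj1 hjd).2 rfl⟩
  · intro r hr
    simp only [mem_coe, mem_filter, mem_range] at hr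
    obtain ⟨hr, hidx⟩ := hr
    rw [← Nat.div_add_mod r d,
      digitIndex_mul_add_eq_iff (div_lt_of_lt_sq hr) (Nat.mod_lt r hd) hj1 hjd] at hidx
    simp only
    rw [← hidx, Nat.div_add_mod]
  · intro ℓ _
    simp only
    rw [Nat.mul_add_div hd, Nat.div_eq_of_lt (Nat.mod_lt _ hd), add_zero]

theorem airplaneIndex_add_mul (hd : 2 ≤ d) (hr : r < d ^ 2) (q : ℕ) :
    airplaneIndex d (r + d ^ 2 * q) =
      if digitIndex d r = d then airplaneIndex d q else some (digitIndex d r) := by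
  by_cases h0 : r = 0 ∧ q = 0
  · obtain ⟨rfl, rfl⟩ := h0
    simp [airplaneIndex, firstBadDigit, digitIndex]
  · have hb : 1 < d ^ 2 := by nlinarith
    rw [airplaneIndex, firstBadDigit, Nat.digits_add _ hb _ _ hr (by tauto), List.find?_cons]
    by_cases hdvd : d + 1 ∣ r
    · rw [if_pos ((succ_dvd_iff_digitIndex_eq hr).1 hdvd)]
      simp [hdvd, airplaneIndex, firstBadDigit]
    · rw [if_neg (mt (succ_dvd_iff_digitIndex_eq hr).2 hdvd)]
      simp [hdvd, digitIndex]

def airplaneCount (d j n : ℕ) : ℕ := #{m ∈ range n | airplaneIndex d m = some j}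

theorem airplaneCount_sq_mul (hd : 2 ≤ d) (hj1 : 1 ≤ j) (hjd : j < d) (n : ℕ) :
    airplaneCount d j (d ^ 2 * n) = d * (n + airplaneCount d j n) := by
  have hindicator : ∀ q, ∀ r < d ^ 2,
      (if airplaneIndex d (d ^ 2 * q + r) = some j then 1 else 0) =
        (if digitIndex d r = j then 1 else 0) +
          (if digitIndex d r = d then 1 else 0) * (if airplaneIndex d q = some j then 1 else 0) := by
    intro q r hr
    rw [add_comm, airplaneIndex_add_mul hd hr]
    split_ifs <;> simp_all
  simp only [airplaneCount, card_filter, sum_range_mul]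
  rw [sum_congr rfl fun q _ => sum_congr rfl fun r hr => hindicator q r (mem_range.1 hr)]
  simp only [sum_add_distrib, ← sum_mul, ← card_filter,
    card_digitIndex_eq hj1 hjd.le, card_digitIndex_eq (by omega : 1 ≤ d) le_rfl]
  rw [sum_const, card_range, smul_eq_mul, ← mul_sum, card_filter]
  ring

theorem airplaneCount_pow_mul_pred_add (hd : 2 ≤ d) (hj1 : 1 ≤ j) (hjd : j < d) (S : ℕ) :
    airplaneCount d j ((d ^ 2) ^ S) * (d - 1) + d ^ S = (d ^ 2) ^ S := by
  induction S with
  | zero => simp [airplaneCount, airplaneIndex, firstBadDigit]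
  | succ S ih =>
    rw [pow_succ' (d ^ 2) S, pow_succ' d S, airplaneCount_sq_mul hd hj1 hjd]
    generalize airplaneCount d j ((d ^ 2) ^ S) = N at ih ⊢
    obtain ⟨e, rfl⟩ : ∃ e, d = e + 1 := ⟨d - 1, by omega⟩
    simp only [add_tsub_cancel_right] at ih ⊢
    rw [← ih]
    ring

end Airplane

theorem stmt15_general (d S j : ℕ) (hd : 2 ≤ d)
    (hj1 : 1 ≤ j) (hj2 : j ≤ d - 1) :
    ((Finset.range ((d ^ 2) ^ S)).filter
        (fun m => airplaneIndex d m = some j)).card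
      = ((d ^ 2) ^ S - d ^ S) / (d - 1) := by
  have h := Airplane.airplaneCount_pow_mul_pred_add hd hj1 (by omega) S
  exact (Nat.div_eq_of_eq_mul_left (by omega) (by rw [Airplane.airplaneCount] at h; omega)).symm

/-- For `d ≥ 2`, `S ≥ 1`, and each `j ∈ {1,...,d-1}`, the number of
`m ∈ {0,...,(d²)^S - 1}` whose reduction yields airplane index `j` is exactly
`((d²)^S - d^S)/(d-1)`. -/
theorem stmt15 (d S j : ℕ) (hd : 2 ≤ d) (hS : 1 ≤ S)
    (hj1 : 1 ≤ j) (hj2 : j ≤ d - 1) :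
    ((Finset.range ((d ^ 2) ^ S)).filter
        (fun m => airplaneIndex d m = some j)).card
      = ((d ^ 2) ^ S - d ^ S) / (d - 1) :=
  stmt15_general d S j hd hj1 hj2
end
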